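/- Let Ω be a bounded domain in a 4-manifold, A a unitary connection on a Hermitian bundle V over Ω, and suppose the Dirac Laplacian satisfies the Bochner formula D_A² = ∇_A^*∇_A + R_A with ‖R_A‖_{L²(Ω)} small. Let K be the norm of the Sobolev embedding L²₁(Ω) → L⁴(Ω). Then the first Dirichlet eigenvalue of D_A² on Ω satisfies μ₁(Ω; D_A²) ≥ (1 − K‖R_A‖_{L²(Ω)}) μ₁(Ω; ∇_A^*∇_A) − K‖R_A‖_{L²(Ω)}. -/

import Mathlib

open MeasureTheory

noncomputable section

abbrev E4 : Type := EuclideanSpace ℝ (Fin 4)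

abbrev Fib (r : ℕ) : Type := EuclideanSpace ℂ (Fin r)

/-- The covariant derivative `∇_A u = ∇u + a ⊗ u` for the unitary connection
`A = Γ + a` on the (trivialized) Hermitian bundle. -/
noncomputable def covDeriv {r : ℕ} (a : E4 → E4 →L[ℝ] (Fib r →L[ℂ] Fib r))
    (u : E4 → Fib r) (x : E4) : E4 →L[ℝ] Fib r :=
  fderiv ℝ u x +
    ((ContinuousLinearMap.apply ℂ (Fib r) (u x)).restrictScalars ℝ).comp (a x)

/-- The first Dirichlet eigenvalue of the covariant Laplacian `∇_A^*∇_A` over `Ω`. -/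
noncomputable def covariantFirstEV {r : ℕ} (Ω : Set E4)
    (a : E4 → E4 →L[ℝ] (Fib r →L[ℂ] Fib r)) : ℝ :=
  sInf { t : ℝ | ∃ ψ : E4 → Fib r, ContDiff ℝ (⊤ : ℕ∞) ψ ∧ HasCompactSupport ψ ∧
      tsupport ψ ⊆ Ω ∧ (∫ x, ‖ψ x‖ ^ 2) = 1 ∧ t = ∫ x, ‖covDeriv a ψ x‖ ^ 2 }

/-- The first Dirichlet eigenvalue of the Dirac Laplacian `D_A² = D_A^*D_A`
over `Ω`: the infimum of `‖D_A ψ‖²_{L²}` over compactly supported smooth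
sections with `‖ψ‖_{L²} = 1`. -/
noncomputable def diracFirstEV {r k : ℕ} (Ω : Set E4)
    (D : (E4 → Fib r) → E4 → Fib k) : ℝ :=
  sInf { t : ℝ | ∃ ψ : E4 → Fib r, ContDiff ℝ (⊤ : ℕ∞) ψ ∧ HasCompactSupport ψ ∧
      tsupport ψ ⊆ Ω ∧ (∫ x, ‖ψ x‖ ^ 2) = 1 ∧ t = ∫ x, ‖D ψ x‖ ^ 2 }

/-- **Eigenvalue bound for the Dirac Laplacian**
(inequality `eq:FirstDiracDirichletEigenvalueBall`): if the Dirac Laplacian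
satisfies the Bochner formula `D_A² = ∇_A^*∇_A + R_A` with `‖R_A‖_{L²(Ω)}`
small and `K` is the norm of the Sobolev embedding `L²₁(Ω) → L⁴(Ω)`, then
`μ₁(Ω; D_A²) ≥ (1 − K‖R_A‖_{L²(Ω)}) μ₁(Ω; ∇_A^*∇_A) − K‖R_A‖_{L²(Ω)}`. -/
theorem diracFirstEV_lower_bound {r k : ℕ} (Ω : Set E4)
    (hΩ : IsOpen Ω) (hΩb : Bornology.IsBounded Ω)
    (a : E4 → E4 →L[ℝ] (Fib r →L[ℂ] Fib r))
    (D : (E4 → Fib r) → E4 → Fib k)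
    (RA : E4 → (Fib r →L[ℂ] Fib r))
    (K : ℝ) (hK : 0 < K)
    -- integrated Bochner formula: `‖D_Aψ‖² = ‖∇_Aψ‖² + (R_Aψ, ψ)`
    (hBochner : ∀ ψ : E4 → Fib r, ContDiff ℝ (⊤ : ℕ∞) ψ → HasCompactSupport ψ →
      tsupport ψ ⊆ Ω →
      (∫ x, ‖D ψ x‖ ^ 2)
        = (∫ x, ‖covDeriv a ψ x‖ ^ 2) + ∫ x, (inner ℂ (RA x (ψ x)) (ψ x) : ℂ).re)
    -- Hölder: `(R_Aψ, ψ) ≥ −‖R_A‖_{L²(Ω)} ‖ψ‖²_{L⁴}`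
    (hHolder : ∀ ψ : E4 → Fib r, ContDiff ℝ (⊤ : ℕ∞) ψ → HasCompactSupport ψ →
      tsupport ψ ⊆ Ω →
      -((∫ x in Ω, ‖RA x‖ ^ 2) ^ (1/2 : ℝ) * (∫ x, ‖ψ x‖ ^ 4) ^ (1/2 : ℝ))
        ≤ ∫ x, (inner ℂ (RA x (ψ x)) (ψ x) : ℂ).re)
    -- Sobolev bound: `‖ψ‖²_{L⁴} ≤ K (‖ψ‖²_{L²} + ‖∇_Aψ‖²_{L²})`
    (hSobolev : ∀ ψ : E4 → Fib r, ContDiff ℝ (⊤ : ℕ∞) ψ → HasCompactSupport ψ →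
      tsupport ψ ⊆ Ω →
      (∫ x, ‖ψ x‖ ^ 4) ^ (1/2 : ℝ)
        ≤ K * ((∫ x, ‖ψ x‖ ^ 2) + ∫ x, ‖covDeriv a ψ x‖ ^ 2))
    -- smallness of `‖R_A‖_{L²(Ω)}`
    (hsmall : K * (∫ x in Ω, ‖RA x‖ ^ 2) ^ (1/2 : ℝ) ≤ 1) :
    (1 - K * (∫ x in Ω, ‖RA x‖ ^ 2) ^ (1/2 : ℝ)) * covariantFirstEV Ω a
        - K * (∫ x in Ω, ‖RA x‖ ^ 2) ^ (1/2 : ℝ)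
      ≤ diracFirstEV Ω D := by
  set R : ℝ := (∫ x in Ω, ‖RA x‖ ^ 2) ^ (1/2 : ℝ) with hRdef
  have hR0 : 0 ≤ R := Real.rpow_nonneg (integral_nonneg fun x => by positivity) _
  by_cases hne : {t : ℝ | ∃ ψ : E4 → Fib r, ContDiff ℝ (⊤ : ℕ∞) ψ ∧ HasCompactSupport ψ ∧
      tsupport ψ ⊆ Ω ∧ (∫ x, ‖ψ x‖ ^ 2) = 1 ∧ t = ∫ x, ‖D ψ x‖ ^ 2}.Nonempty
  · refine le_csInf hne ?_
    rintro t ⟨ψ, hψ1, hψ2, hψ3, hψ4, rfl⟩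
    have hB := hBochner ψ hψ1 hψ2 hψ3
    have hH := hHolder ψ hψ1 hψ2 hψ3
    have hS := hSobolev ψ hψ1 hψ2 hψ3
    set N : ℝ := ∫ x, ‖covDeriv a ψ x‖ ^ 2 with hNdef
    have hN0 : 0 ≤ N := integral_nonneg fun x => by positivity
    have hμ : covariantFirstEV Ω a ≤ N := by
      refine csInf_le ⟨0, ?_⟩ ⟨ψ, hψ1, hψ2, hψ3, hψ4, rfl⟩
      rintro s ⟨φ, _, _, _, _, rfl⟩
      exact integral_nonneg fun x => by positivity
    rw [hψ4] at hS
    have h1 : -(R * (K * (1 + N))) ≤ ∫ x, (inner ℂ (RA x (ψ x)) (ψ x) : ℂ).re :=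
      le_trans (neg_le_neg (mul_le_mul_of_nonneg_left hS hR0)) hH
    have hμ0 : 0 ≤ covariantFirstEV Ω a := by
      refine le_csInf ⟨N, ψ, hψ1, hψ2, hψ3, hψ4, rfl⟩ ?_
      rintro s ⟨φ, _, _, _, _, rfl⟩
      exact integral_nonneg fun x => by positivity
    rw [hB]
    nlinarith [mul_le_mul_of_nonneg_left hμ (sub_nonneg.mpr hsmall), hK.le,
      mul_nonneg hK.le hR0]
  · have hempty : {t : ℝ | ∃ ψ : E4 → Fib r, ContDiff ℝ (⊤ : ℕ∞) ψ ∧ HasCompactSupport ψ ∧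
        tsupport ψ ⊆ Ω ∧ (∫ x, ‖ψ x‖ ^ 2) = 1 ∧
        t = ∫ x, ‖covDeriv a ψ x‖ ^ 2} = ∅ := by
      rw [Set.eq_empty_iff_forall_notMem]
      rintro t ⟨ψ, h1, h2, h3, h4, _⟩
      exact hne ⟨_, ψ, h1, h2, h3, h4, rfl⟩
    rw [Set.not_nonempty_iff_eq_empty] at hne
    unfold diracFirstEV covariantFirstEV
    rw [hne, hempty, Real.sInf_empty]
    have : 0 ≤ K * R := mul_nonneg hK.le hR0
    linarith


end
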